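/- Consider the uncertain linear system with direct feedthrough in the nonlinearity channels: ẋ(t) = Ā x(t) + Σⱼ B₁ⱼ ξⱼ(t) + Σᵢ B̄₂ᵢ ξ̄ᵢ(t) + B̄₂ u(t), with uncertainty outputs ζⱼ(t) = C₁ⱼ x(t) + D₁ⱼ u(t) and nonlinearity-channel outputs ζ̄ᵢ(t) = C̄₂ᵢ x(t) + D̄₂ᵢ u(t) + D̄₁₁ᵢ ξ̄ᵢ(t), where for each i the feedthrough satisfies D̄₁₁ᵢᵀ D̄₁₁ᵢ < I (so Φᵢ = I − D̄₁₁ᵢᵀD̄₁₁ᵢ and Φ̄ᵢ = I − D̄₁₁ᵢD̄₁₁ᵢᵀ are positive definite). Suppose the signals satisfy, for all T₀ ≥ 0, the IQCs ∫₀^{T₀}(‖ξⱼ‖² − ‖ζⱼ‖²)dt ≤ x₀ᵀS₁ⱼx₀ and ∫₀^{T₀}(‖ξ̄ᵢ‖² − ‖ζ̄ᵢ‖²)dt ≤ x₀ᵀS̃₂ᵢx₀ with S₁ⱼ, S̃₂ᵢ positive definite. Define the loop-shifted data Ǎ = Ā + Σᵢ B̄₂ᵢ Φᵢ⁻¹ D̄₁₁ᵢᵀ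 C̄₂ᵢ, B̌₂ᵢ = B̄₂ᵢ Φᵢ^{-1/2}, B̌₂ = B̄₂ + Σᵢ B̄₂ᵢ Φᵢ⁻¹ D̄₁₁ᵢᵀ D̄₂ᵢ, Č₂ᵢ = Φ̄ᵢ^{-1/2} C̄₂ᵢ, Ď₂ᵢ = Φ̄ᵢ^{-1/2} D̄₂ᵢ. Suppose X positive semidefinite solves the algebraic Riccati equation for the data (Ǎ, B̌₂, B₁ⱼ, C₁ⱼ, D₁ⱼ, B̌₂ᵢ, Č₂ᵢ, Ď₂ᵢ, R, G, τⱼ) (in expanded form: (Ǎ − B̌₂G_τ⁻¹L_τᵀ)ᵀX + X(Ǎ − B̌₂G_τ⁻¹L_τᵀ) + X(W_τ − B̌₂G_τ⁻¹B̌₂ᵀ)X + Q_τ − L_τG_τ⁻¹L_τᵀ = 0 with G_τ = G + ΣⱼτⱼD₁ⱼᵀD₁ⱼ + ΣᵢĎ₂ᵢᵀĎ₂ᵢ, Q_τ = R + ΣⱼτⱼC₁ⱼᵀC₁ⱼ + ΣᵢČ₂ᵢᵀČ₂ᵢ, L_τ = ΣⱼτⱼC₁ⱼᵀD₁ⱼ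 + ΣᵢČ₂ᵢᵀĎ₂ᵢ, W_τ = Σⱼ(1/τⱼ)B₁ⱼB₁ⱼᵀ + ΣᵢB̌₂ᵢB̌₂ᵢᵀ), and the control is u(t) = K x(t) with K = −G_τ⁻¹(B̌₂ᵀX + L_τᵀ). Then for every T₀ ≥ 0, ∫₀^{T₀}( x(t)ᵀ R x(t) + u(t)ᵀ G u(t) ) dt ≤ x₀ᵀ X x₀ + Σⱼ τⱼ x₀ᵀ S₁ⱼ x₀ + Σᵢ x₀ᵀ S̃₂ᵢ x₀. -/

import Mathlib

/-!
With the storage function `V(x) = xᵀXx`, the Riccati equation, rewritten for the closed loop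
`u = Kx`, says that `xᵀRx + uᵀGu + V̇` plus the supply terms `Σⱼ τⱼ‖ζⱼ‖² + Σᵢ ‖ζ̌ᵢ‖²` equals
`-Σⱼ τⱼ⁻¹‖B₁ⱼᵀXx‖² - Σᵢ ‖B̌₂ᵢᵀXx‖² + 2(Σⱼ B₁ⱼξⱼ + Σᵢ B̌₂ᵢξ̌ᵢ)ᵀXx`; completing the squares
`2aᵀc ≤ τ‖a‖² + τ⁻¹‖c‖²` yields the dissipation inequality
`xᵀRx + uᵀGu + V̇ ≤ Σⱼ τⱼ(‖ξⱼ‖² − ‖ζⱼ‖²) + Σᵢ (‖ξ̌ᵢ‖² − ‖ζ̌ᵢ‖²)` for the loop-shifted system.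
The loop-shifting change of variables leaves the state equation unchanged, and by the
push-through identity `(I − DDᵀ)⁻¹ = I + D(I − DᵀD)⁻¹Dᵀ` it maps the loop-shifted IQC integrand
`‖ξ̌ᵢ‖² − ‖ζ̌ᵢ‖²` onto the original `‖ξ̄ᵢ‖² − ‖ζ̄ᵢ‖²`. Integrating over `[0, T₀]`, dropping
`V(x(T₀)) ≥ 0` and applying the IQCs gives the bound.
-/

open Matrix MeasureTheory

section DotProduct
variable {R : Type*} [CommRing R] {α β γ : Type*} [Fintype α] [Fintype β] [Fintype γ]

theorem Matrix.dotProduct_transpose_mul_mulVec (A : Matrix α β R) (B : Matrix α γ R)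
    (v : β → R) (w : γ → R) : v ⬝ᵥ ((Aᵀ * B) *ᵥ w) = (A *ᵥ v) ⬝ᵥ (B *ᵥ w) := by
  rw [← mulVec_mulVec, dotProduct_mulVec, vecMul_transpose]

theorem Matrix.transpose_mulVec_dotProduct (A : Matrix α β R) (v : β → R) (w : α → R) :
    (Aᵀ *ᵥ w) ⬝ᵥ v = w ⬝ᵥ (A *ᵥ v) := by
  rw [mulVec_transpose, dotProduct_mulVec]

theorem Matrix.dotProduct_mulVec_comm_of_transpose_eq {X : Matrix α α R} (hX : Xᵀ = X)
    (v w : α → R) : v ⬝ᵥ (X *ᵥ w) = w ⬝ᵥ (X *ᵥ v) := by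
  rw [← transpose_mulVec_dotProduct, hX, dotProduct_comm]

theorem Matrix.dotProduct_mul_transpose_mulVec_self (B : Matrix α β R) (y : α → R) :
    y ⬝ᵥ ((B * Bᵀ) *ᵥ y) = (Bᵀ *ᵥ y) ⬝ᵥ (Bᵀ *ᵥ y) := by
  rw [← dotProduct_transpose_mul_mulVec, transpose_transpose]

theorem Matrix.sum_sq_eq_dotProduct_self (v : α → R) : ∑ a, v a ^ 2 = v ⬝ᵥ v := by
  simp only [dotProduct, sq]

theorem Matrix.add_mulVec_dotProduct_self (C : Matrix γ α R) (D : Matrix γ β R)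
    (x : α → R) (u : β → R) :
    (C *ᵥ x + D *ᵥ u) ⬝ᵥ (C *ᵥ x + D *ᵥ u) =
      x ⬝ᵥ ((Cᵀ * C) *ᵥ x) + 2 * (x ⬝ᵥ ((Cᵀ * D) *ᵥ u)) + u ⬝ᵥ ((Dᵀ * D) *ᵥ u) := by
  simp only [dotProduct_transpose_mul_mulVec, dotProduct_add, add_dotProduct,
    dotProduct_comm (D *ᵥ u) (C *ᵥ x)]
  ring

end DotProduct

theorem Matrix.two_mul_dotProduct_le {α : Type*} [Fintype α] {τ : ℝ} (hτ : 0 < τ)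
    (a c : α → ℝ) : 2 * (a ⬝ᵥ c) ≤ τ * (a ⬝ᵥ a) + τ⁻¹ * (c ⬝ᵥ c) := by
  have h : (τ • a - c) ⬝ᵥ (τ • a - c) =
      τ * (τ * (a ⬝ᵥ a) + τ⁻¹ * (c ⬝ᵥ c) - 2 * (a ⬝ᵥ c)) := by
    simp only [sub_dotProduct, dotProduct_sub, smul_dotProduct, dotProduct_smul, smul_eq_mul,
      dotProduct_comm c a]
    field_simp
    ring
  have h0 : 0 ≤ (τ • a - c) ⬝ᵥ (τ • a - c) := by
    simpa using dotProduct_self_star_nonneg (τ • a - c)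
  rw [h] at h0
  linarith [(mul_nonneg_iff_of_pos_left hτ).1 h0]

theorem Matrix.two_mul_mulVec_dotProduct_le {α β : Type*} [Fintype α] [Fintype β] {c : ℝ}
    (hc : 0 < c) (B : Matrix α β ℝ) (a : β → ℝ) (y : α → ℝ) :
    2 * ((B *ᵥ a) ⬝ᵥ y) ≤ c * (a ⬝ᵥ a) + c⁻¹ * ((Bᵀ *ᵥ y) ⬝ᵥ (Bᵀ *ᵥ y)) := by
  rw [dotProduct_comm, ← transpose_mulVec_dotProduct, dotProduct_comm]
  exact two_mul_dotProduct_le hc _ _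

section Calculus
variable {α β : Type*} [Fintype α] {t : ℝ}

theorem HasDerivAt.dotProduct {f g : ℝ → α → ℝ} {f' g' : α → ℝ}
    (hf : HasDerivAt f f' t) (hg : HasDerivAt g g' t) :
    HasDerivAt (fun s => f s ⬝ᵥ g s) (f' ⬝ᵥ g t + f t ⬝ᵥ g') t := by
  have h := HasDerivAt.fun_sum (u := Finset.univ)
    fun a _ => (hasDerivAt_pi.1 hf a).fun_mul (hasDerivAt_pi.1 hg a)
  rwa [Finset.sum_add_distrib] at h

theorem HasDerivAt.const_mulVec (A : Matrix β α ℝ) {f : ℝ → α → ℝ} {f' : α → ℝ}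
    (hf : HasDerivAt f f' t) : HasDerivAt (fun s => A *ᵥ f s) (A *ᵥ f') t :=
  hasDerivAt_pi.2 fun b => by
    simpa [mulVec] using (hasDerivAt_const t (A b)).dotProduct hf

theorem HasDerivAt.dotProduct_mulVec_self {X : Matrix α α ℝ} (hX : Xᵀ = X)
    {f : ℝ → α → ℝ} {f' : α → ℝ} (hf : HasDerivAt f f' t) :
    HasDerivAt (fun s => f s ⬝ᵥ (X *ᵥ f s)) (2 * (f' ⬝ᵥ (X *ᵥ f t))) t := by
  convert hf.dotProduct (hf.const_mulVec X) using 1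
  rw [dotProduct_mulVec_comm_of_transpose_eq hX (f t) f']
  ring

end Calculus

theorem intervalIntegral.integral_le_of_add_deriv_le {V V' c w : ℝ → ℝ} {a b : ℝ} (hab : a ≤ b)
    (hV : ∀ t ∈ Set.Icc a b, HasDerivAt V (V' t) t) (hV' : ContinuousOn V' (Set.Icc a b))
    (hc : ContinuousOn c (Set.Icc a b)) (hw : ContinuousOn w (Set.Icc a b))
    (hle : ∀ t ∈ Set.Icc a b, c t + V' t ≤ w t) :
    ∫ t in a..b, c t ≤ V a - V b + ∫ t in a..b, w t := by
  rw [← Set.uIcc_of_le hab] at hV hV' hc hw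
  have hFTC : ∫ t in a..b, V' t = V b - V a :=
    integral_eq_sub_of_hasDerivAt hV hV'.intervalIntegrable
  have hmono : ∫ t in a..b, (c t + V' t) ≤ ∫ t in a..b, w t :=
    integral_mono_on hab (hc.add hV').intervalIntegrable hw.intervalIntegrable hle
  rw [integral_add hc.intervalIntegrable hV'.intervalIntegrable, hFTC] at hmono
  linarith

theorem intervalIntegral.integral_finset_sum_le {ι : Type*} (s : Finset ι) {f : ι → ℝ → ℝ}
    {M : ι → ℝ} {a b : ℝ} (hf : ∀ i ∈ s, IntervalIntegrable (f i) volume a b)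
    (hM : ∀ i ∈ s, ∫ t in a..b, f i t ≤ M i) : ∫ t in a..b, ∑ i ∈ s, f i t ≤ ∑ i ∈ s, M i := by
  rw [integral_finsetSum hf]
  exact Finset.sum_le_sum hM

theorem integral_le_of_dissipation {ι κ σ : Type*} [Fintype ι] [Fintype κ] [Fintype σ]
    {X : Matrix σ σ ℝ} (hX : X.PosSemidef) {x xd : ℝ → σ → ℝ} {c : ℝ → ℝ}
    {τ M : ι → ℝ} {f : ι → ℝ → ℝ} {N : κ → ℝ} {h : κ → ℝ → ℝ} {T : ℝ} (hT : 0 ≤ T)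
    (hx : ∀ t ∈ Set.Icc 0 T, HasDerivAt x (xd t) t) (hxd : ContinuousOn xd (Set.Icc 0 T))
    (hc : ContinuousOn c (Set.Icc 0 T)) (hf : ∀ j, ContinuousOn (f j) (Set.Icc 0 T))
    (hh : ∀ i, ContinuousOn (h i) (Set.Icc 0 T)) (hτ : ∀ j, 0 ≤ τ j)
    (hdiss : ∀ t ∈ Set.Icc 0 T,
      c t + 2 * (xd t ⬝ᵥ (X *ᵥ x t)) ≤ (∑ j, τ j * f j t) + ∑ i, h i t)
    (hM : ∀ j, ∫ t in 0..T, f j t ≤ M j) (hN : ∀ i, ∫ t in 0..T, h i t ≤ N i) :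
    ∫ t in 0..T, c t ≤ x 0 ⬝ᵥ (X *ᵥ x 0) + (∑ j, τ j * M j) + ∑ i, N i := by
  have hXs : Xᵀ = X := isHermitian_iff_isSymm.1 hX.isHermitian
  have hxc : ContinuousOn x (Set.Icc 0 T) := fun t ht =>
    (hx t ht).continuousAt.continuousWithinAt
  have hcost := intervalIntegral.integral_le_of_add_deriv_le hT
    (fun t ht => (hx t ht).dotProduct_mulVec_self hXs) (by fun_prop) hc (by fun_prop) hdiss
  have hsupply : ∫ t in 0..T, ((∑ j, τ j * f j t) + ∑ i, h i t) ≤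
      (∑ j, τ j * M j) + ∑ i, N i := by
    rw [intervalIntegral.integral_add
      ((by fun_prop : ContinuousOn _ _).intervalIntegrable_of_Icc hT)
      ((by fun_prop : ContinuousOn _ _).intervalIntegrable_of_Icc hT)]
    refine add_le_add (intervalIntegral.integral_finset_sum_le _
      (fun j _ => ((hf j).const_mul (τ j)).intervalIntegrable_of_Icc hT) fun j _ => ?_)
      (intervalIntegral.integral_finset_sum_le _
        (fun i _ => (hh i).intervalIntegrable_of_Icc hT) fun i _ => hN i)
    rw [intervalIntegral.integral_const_mul]
    exact mul_le_mul_of_nonneg_left (hM j) (hτ j)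
  have hVT : 0 ≤ x T ⬝ᵥ (X *ᵥ x T) := by simpa using hX.dotProduct_mulVec_nonneg (x T)
  linarith

section LoopShift
variable {α β : Type*} [Fintype α] [Fintype β] [DecidableEq α] [DecidableEq β]

theorem Matrix.inv_one_sub_mul {R : Type*} [CommRing R] (D : Matrix α β R) (E : Matrix β α R)
    (h : IsUnit (1 - E * D).det) : (1 - D * E)⁻¹ = 1 + D * (1 - E * D)⁻¹ * E := by
  refine inv_eq_right_inv ?_
  have hpush : (1 - D * E) * D = D * (1 - E * D) := by
    simp only [Matrix.sub_mul, Matrix.mul_sub, Matrix.one_mul, Matrix.mul_one, Matrix.mul_assoc]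
  calc (1 - D * E) * (1 + D * (1 - E * D)⁻¹ * E)
      = (1 - D * E) + D * ((1 - E * D) * (1 - E * D)⁻¹) * E := by
        rw [Matrix.mul_add, Matrix.mul_one, ← Matrix.mul_assoc, ← Matrix.mul_assoc, hpush,
          Matrix.mul_assoc D]
    _ = 1 := by rw [mul_nonsing_inv _ h, Matrix.mul_one, sub_add_cancel]

variable {D : Matrix α β ℝ} {P : Matrix β β ℝ} {Q : Matrix α α ℝ}

omit [DecidableEq α] in
theorem loopShift_mulVec (hP : IsUnit P.det) (hP2 : P * P = 1 - Dᵀ * D)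
    {γ : Type*} [Fintype γ] (B : Matrix γ β ℝ) (v : α → ℝ) (w : β → ℝ) :
    (B * P⁻¹) *ᵥ (P *ᵥ w - P⁻¹ *ᵥ (Dᵀ *ᵥ v)) = B *ᵥ w - (B * (1 - Dᵀ * D)⁻¹ * Dᵀ) *ᵥ v := by
  rw [← hP2, Matrix.mul_inv_rev, mulVec_sub, mulVec_mulVec, mulVec_mulVec, mulVec_mulVec,
    Matrix.mul_assoc B, nonsing_inv_mul _ hP, Matrix.mul_one, Matrix.mul_assoc B,
    Matrix.mul_assoc B]

theorem loopShift_dotProduct_self_sub (hPs : Pᵀ = P) (hP : IsUnit P.det)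
    (hP2 : P * P = 1 - Dᵀ * D) (hQs : Qᵀ = Q) (hQ2 : Q * Q = 1 - D * Dᵀ) (v : α → ℝ)
    (w : β → ℝ) :
    (P *ᵥ w - P⁻¹ *ᵥ (Dᵀ *ᵥ v)) ⬝ᵥ (P *ᵥ w - P⁻¹ *ᵥ (Dᵀ *ᵥ v)) - (Q⁻¹ *ᵥ v) ⬝ᵥ (Q⁻¹ *ᵥ v) =
      w ⬝ᵥ w - (v + D *ᵥ w) ⬝ᵥ (v + D *ᵥ w) := by
  have hΦ : IsUnit (1 - Dᵀ * D).det := by rw [← hP2, det_mul]; exact hP.mul hP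
  have hP' : P⁻¹ᵀ * P⁻¹ = (1 - Dᵀ * D)⁻¹ := by
    rw [transpose_nonsing_inv, hPs, ← Matrix.mul_inv_rev, hP2]
  have hQ' : Q⁻¹ᵀ * Q⁻¹ = 1 + D * (1 - Dᵀ * D)⁻¹ * Dᵀ := by
    rw [transpose_nonsing_inv, hQs, ← Matrix.mul_inv_rev, hQ2, inv_one_sub_mul D Dᵀ hΦ]
  set y := Dᵀ *ᵥ v
  have h1 : (P *ᵥ w) ⬝ᵥ (P *ᵥ w) = w ⬝ᵥ w - (D *ᵥ w) ⬝ᵥ (D *ᵥ w) := by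
    rw [← dotProduct_transpose_mul_mulVec, hPs, hP2, sub_mulVec, one_mulVec, dotProduct_sub,
      dotProduct_transpose_mul_mulVec]
  have h2 : (P *ᵥ w) ⬝ᵥ (P⁻¹ *ᵥ y) = (D *ᵥ w) ⬝ᵥ v := by
    rw [← dotProduct_transpose_mul_mulVec, hPs, mul_nonsing_inv _ hP, one_mulVec,
      ← transpose_mulVec_dotProduct, transpose_transpose]
  have h3 : (Q⁻¹ *ᵥ v) ⬝ᵥ (Q⁻¹ *ᵥ v) = v ⬝ᵥ v + (P⁻¹ *ᵥ y) ⬝ᵥ (P⁻¹ *ᵥ y) := by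
    have hDΦD : D * (1 - Dᵀ * D)⁻¹ * Dᵀ = Dᵀᵀ * (P⁻¹ᵀ * P⁻¹ * Dᵀ) := by
      rw [transpose_transpose, hP', Matrix.mul_assoc]
    rw [← dotProduct_transpose_mul_mulVec, hQ', add_mulVec, one_mulVec, dotProduct_add, hDΦD,
      dotProduct_transpose_mul_mulVec, ← mulVec_mulVec, dotProduct_transpose_mul_mulVec]
  simp only [sub_dotProduct, dotProduct_sub, add_dotProduct, dotProduct_add, h1, h2, h3,
    dotProduct_comm (P⁻¹ *ᵥ y) (P *ᵥ w), dotProduct_comm v (D *ᵥ w)]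
  ring

end LoopShift

section Riccati
variable {R : Type*} [CommRing R] {σ μ : Type*} [Fintype σ] [Fintype μ] [DecidableEq μ]
  {A Q W X : Matrix σ σ R} {B L : Matrix σ μ R} {G : Matrix μ μ R} {K : Matrix μ σ R}

theorem riccati_closedLoop (hXs : Xᵀ = X) (hGs : Gᵀ = G) (hG : IsUnit G.det)
    (hRic : (A - B * G⁻¹ * Lᵀ)ᵀ * X + X * (A - B * G⁻¹ * Lᵀ) +
      X * (W - B * G⁻¹ * Bᵀ) * X + Q - L * G⁻¹ * Lᵀ = 0)
    (hK : K = -(G⁻¹ * (Bᵀ * X + Lᵀ))) :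
    (A + B * K)ᵀ * X + X * (A + B * K) + X * W * X + (Q + L * K + Kᵀ * Lᵀ + Kᵀ * G * K) = 0 := by
  have hGi : G⁻¹ᵀ = G⁻¹ := by rw [transpose_nonsing_inv, hGs]
  have hGK : G * K = -(Bᵀ * X + Lᵀ) := by
    rw [hK, Matrix.mul_neg, ← Matrix.mul_assoc, mul_nonsing_inv _ hG, Matrix.one_mul]
  have hKT : Kᵀ = -((X * B + L) * G⁻¹) := by
    rw [hK]
    simp only [transpose_neg, transpose_mul, transpose_add, transpose_transpose, hXs, hGi]
  rw [← hRic, Matrix.mul_assoc Kᵀ G K, hGK, transpose_add, transpose_mul, hKT, hK]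
  simp only [transpose_sub, transpose_mul, transpose_transpose, hGi, Matrix.mul_add,
    Matrix.add_mul, Matrix.mul_sub, Matrix.sub_mul, Matrix.mul_neg, Matrix.neg_mul,
    Matrix.mul_assoc]
  abel

omit [DecidableEq μ] in
theorem dotProduct_mulVec_closedLoop (hXs : Xᵀ = X) (x : σ → R) :
    x ⬝ᵥ (((A + B * K)ᵀ * X + X * (A + B * K) + X * W * X +
      (Q + L * K + Kᵀ * Lᵀ + Kᵀ * G * K)) *ᵥ x) =
      2 * (((A + B * K) *ᵥ x) ⬝ᵥ (X *ᵥ x)) + (X *ᵥ x) ⬝ᵥ (W *ᵥ (X *ᵥ x)) +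
        (x ⬝ᵥ (Q *ᵥ x) + 2 * (x ⬝ᵥ (L *ᵥ (K *ᵥ x))) + (K *ᵥ x) ⬝ᵥ (G *ᵥ (K *ᵥ x))) := by
  have h₁ : x ⬝ᵥ (((A + B * K)ᵀ * X) *ᵥ x) = ((A + B * K) *ᵥ x) ⬝ᵥ (X *ᵥ x) :=
    dotProduct_transpose_mul_mulVec _ _ _ _
  have h₂ : x ⬝ᵥ ((X * (A + B * K)) *ᵥ x) = ((A + B * K) *ᵥ x) ⬝ᵥ (X *ᵥ x) := by
    rw [show X * (A + B * K) = Xᵀ * (A + B * K) by rw [hXs], dotProduct_transpose_mul_mulVec,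
      dotProduct_comm]
  have h₃ : x ⬝ᵥ ((X * W * X) *ᵥ x) = (X *ᵥ x) ⬝ᵥ (W *ᵥ (X *ᵥ x)) := by
    rw [show X * W * X = Xᵀ * (W * X) by rw [hXs, Matrix.mul_assoc],
      dotProduct_transpose_mul_mulVec, mulVec_mulVec]
  have h₄ : x ⬝ᵥ ((Kᵀ * Lᵀ) *ᵥ x) = x ⬝ᵥ ((L * K) *ᵥ x) := by
    rw [dotProduct_transpose_mul_mulVec, ← transpose_mulVec_dotProduct, transpose_transpose,
      dotProduct_comm, mulVec_mulVec]
  have h₅ : x ⬝ᵥ ((Kᵀ * G * K) *ᵥ x) = (K *ᵥ x) ⬝ᵥ (G *ᵥ (K *ᵥ x)) := by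
    rw [Matrix.mul_assoc, dotProduct_transpose_mul_mulVec, mulVec_mulVec]
  simp only [add_mulVec, dotProduct_add, h₁, h₂, h₃, h₄, h₅, mulVec_mulVec]
  ring

end Riccati

section LoopShiftedSystem
variable {ι κ σ μ : Type*} [Fintype ι] [Fintype κ] [Fintype σ] [Fintype μ]
  {p q : ι → Type*} [∀ j, Fintype (p j)] [∀ j, Fintype (q j)]
  {r s : κ → Type*} [∀ i, Fintype (r i)] [∀ i, Fintype (s i)]

theorem costWeights_quadForm_eq (R : Matrix σ σ ℝ) (G : Matrix μ μ ℝ) (τ : ι → ℝ)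
    (C₁ : ∀ j, Matrix (q j) σ ℝ) (D₁ : ∀ j, Matrix (q j) μ ℝ)
    (C₂ : ∀ i, Matrix (s i) σ ℝ) (D₂ : ∀ i, Matrix (s i) μ ℝ) (x : σ → ℝ) (u : μ → ℝ) :
    x ⬝ᵥ ((R + (∑ j, τ j • ((C₁ j)ᵀ * C₁ j)) + ∑ i, (C₂ i)ᵀ * C₂ i) *ᵥ x) +
      2 * (x ⬝ᵥ (((∑ j, τ j • ((C₁ j)ᵀ * D₁ j)) + ∑ i, (C₂ i)ᵀ * D₂ i) *ᵥ u)) +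
      u ⬝ᵥ ((G + (∑ j, τ j • ((D₁ j)ᵀ * D₁ j)) + ∑ i, (D₂ i)ᵀ * D₂ i) *ᵥ u) =
    x ⬝ᵥ (R *ᵥ x) + u ⬝ᵥ (G *ᵥ u) +
      (∑ j, τ j * ((C₁ j *ᵥ x + D₁ j *ᵥ u) ⬝ᵥ (C₁ j *ᵥ x + D₁ j *ᵥ u))) +
      ∑ i, (C₂ i *ᵥ x + D₂ i *ᵥ u) ⬝ᵥ (C₂ i *ᵥ x + D₂ i *ᵥ u) := by
  simp only [add_mulVec_dotProduct_self]
  simp only [add_mulVec, sum_mulVec, smul_mulVec, dotProduct_add,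
    dotProduct_sum, dotProduct_smul, smul_eq_mul, mul_add, Finset.sum_add_distrib,
    Finset.mul_sum, mul_left_comm _ (2 : ℝ)]
  ring

theorem inputWeight_quadForm_eq (τ : ι → ℝ) (B₁ : ∀ j, Matrix σ (p j) ℝ)
    (B₂ : ∀ i, Matrix σ (r i) ℝ) (y : σ → ℝ) :
    y ⬝ᵥ (((∑ j, (τ j)⁻¹ • (B₁ j * (B₁ j)ᵀ)) + ∑ i, B₂ i * (B₂ i)ᵀ) *ᵥ y) =
      (∑ j, (τ j)⁻¹ * (((B₁ j)ᵀ *ᵥ y) ⬝ᵥ ((B₁ j)ᵀ *ᵥ y))) +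
        ∑ i, ((B₂ i)ᵀ *ᵥ y) ⬝ᵥ ((B₂ i)ᵀ *ᵥ y) := by
  simp only [add_mulVec, sum_mulVec, smul_mulVec, dotProduct_add, dotProduct_sum,
    dotProduct_smul, smul_eq_mul, dotProduct_mul_transpose_mulVec_self]

theorem loopShifted_dissipation {A X R Qτ Wτ : Matrix σ σ ℝ} {B₂ Lτ : Matrix σ μ ℝ}
    {G Gτ : Matrix μ μ ℝ} {K : Matrix μ σ ℝ} {τ : ι → ℝ}
    {B₁ : ∀ j, Matrix σ (p j) ℝ} {C₁ : ∀ j, Matrix (q j) σ ℝ} {D₁ : ∀ j, Matrix (q j) μ ℝ}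
    {B₂' : ∀ i, Matrix σ (r i) ℝ} {C₂ : ∀ i, Matrix (s i) σ ℝ} {D₂ : ∀ i, Matrix (s i) μ ℝ}
    (hτ : ∀ j, 0 < τ j) (hXs : Xᵀ = X)
    (hGτ : Gτ = G + (∑ j, τ j • ((D₁ j)ᵀ * D₁ j)) + ∑ i, (D₂ i)ᵀ * D₂ i)
    (hQτ : Qτ = R + (∑ j, τ j • ((C₁ j)ᵀ * C₁ j)) + ∑ i, (C₂ i)ᵀ * C₂ i)
    (hLτ : Lτ = (∑ j, τ j • ((C₁ j)ᵀ * D₁ j)) + ∑ i, (C₂ i)ᵀ * D₂ i)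
    (hWτ : Wτ = (∑ j, (τ j)⁻¹ • (B₁ j * (B₁ j)ᵀ)) + ∑ i, B₂' i * (B₂' i)ᵀ)
    (hcl : (A + B₂ * K)ᵀ * X + X * (A + B₂ * K) + X * Wτ * X +
      (Qτ + Lτ * K + Kᵀ * Lτᵀ + Kᵀ * Gτ * K) = 0)
    (x : σ → ℝ) (a : ∀ j, p j → ℝ) (b : ∀ i, r i → ℝ) (u : μ → ℝ) (hu : u = K *ᵥ x) :
    x ⬝ᵥ (R *ᵥ x) + u ⬝ᵥ (G *ᵥ u) +
        2 * ((A *ᵥ x + (∑ j, B₁ j *ᵥ a j) + (∑ i, B₂' i *ᵥ b i) + B₂ *ᵥ u) ⬝ᵥ (X *ᵥ x)) ≤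
      (∑ j, τ j * (a j ⬝ᵥ a j - (C₁ j *ᵥ x + D₁ j *ᵥ u) ⬝ᵥ (C₁ j *ᵥ x + D₁ j *ᵥ u))) +
        ∑ i, (b i ⬝ᵥ b i - (C₂ i *ᵥ x + D₂ i *ᵥ u) ⬝ᵥ (C₂ i *ᵥ x + D₂ i *ᵥ u)) := by
  subst hu hGτ hQτ hLτ hWτ
  have h0 := congrArg (fun M => x ⬝ᵥ (M *ᵥ x)) hcl
  simp only [dotProduct_mulVec_closedLoop hXs, zero_mulVec, dotProduct_zero,
    inputWeight_quadForm_eq, costWeights_quadForm_eq] at h0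
  have h₁ := Finset.sum_le_sum fun j (_ : j ∈ Finset.univ) =>
    two_mul_mulVec_dotProduct_le (hτ j) (B₁ j) (a j) (X *ᵥ x)
  have h₂ := Finset.sum_le_sum fun i (_ : i ∈ Finset.univ) =>
    two_mul_mulVec_dotProduct_le one_pos (B₂' i) (b i) (X *ᵥ x)
  simp only [inv_one, one_mul] at h₂
  rw [← Finset.mul_sum] at h₁ h₂
  simp only [add_dotProduct, sum_dotProduct, add_mulVec, ← mulVec_mulVec, mul_sub,
    Finset.sum_sub_distrib, Finset.sum_add_distrib] at h0 h₁ h₂ ⊢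
  linarith

theorem loopShift_dynamics [∀ i, DecidableEq (r i)] {Abar Acheck : Matrix σ σ ℝ}
    {B₂bar B₂check : Matrix σ μ ℝ} {B₂bar' B₂check' : ∀ i, Matrix σ (r i) ℝ}
    {C₂bar : ∀ i, Matrix (s i) σ ℝ} {D₂bar : ∀ i, Matrix (s i) μ ℝ}
    {D₁₁ : ∀ i, Matrix (s i) (r i) ℝ} {P : ∀ i, Matrix (r i) (r i) ℝ}
    (hP : ∀ i, IsUnit (P i).det) (hP2 : ∀ i, P i * P i = 1 - (D₁₁ i)ᵀ * D₁₁ i)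
    (hAcheck : Acheck = Abar +
      ∑ i, B₂bar' i * (1 - (D₁₁ i)ᵀ * D₁₁ i)⁻¹ * (D₁₁ i)ᵀ * C₂bar i)
    (hB₂check' : ∀ i, B₂check' i = B₂bar' i * (P i)⁻¹)
    (hB₂check : B₂check = B₂bar +
      ∑ i, B₂bar' i * (1 - (D₁₁ i)ᵀ * D₁₁ i)⁻¹ * (D₁₁ i)ᵀ * D₂bar i)
    (x e : σ → ℝ) (ξbar : ∀ i, r i → ℝ) (u : μ → ℝ) :
    Abar *ᵥ x + e + (∑ i, B₂bar' i *ᵥ ξbar i) + B₂bar *ᵥ u =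
      Acheck *ᵥ x + e + (∑ i, B₂check' i *ᵥ
        (P i *ᵥ ξbar i - (P i)⁻¹ *ᵥ ((D₁₁ i)ᵀ *ᵥ (C₂bar i *ᵥ x + D₂bar i *ᵥ u)))) +
        B₂check *ᵥ u := by
  have hshift := fun i => loopShift_mulVec (hP i) (hP2 i) (B₂bar' i)
  simp only [hB₂check', hshift]
  simp only [hAcheck, hB₂check, add_mulVec, sum_mulVec, mulVec_add, mulVec_mulVec,
    Finset.sum_sub_distrib, Finset.sum_add_distrib]
  abel

end LoopShiftedSystem

theorem stmt10_general (n m k g : ℕ) (p q : Fin k → ℕ) (r s : Fin g → ℕ)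
    (Abar : Matrix (Fin n) (Fin n) ℝ) (B₂bar : Matrix (Fin n) (Fin m) ℝ)
    (B₁ : ∀ j : Fin k, Matrix (Fin n) (Fin (p j)) ℝ)
    (C₁ : ∀ j : Fin k, Matrix (Fin (q j)) (Fin n) ℝ)
    (D₁ : ∀ j : Fin k, Matrix (Fin (q j)) (Fin m) ℝ)
    (B₂bar' : ∀ i : Fin g, Matrix (Fin n) (Fin (r i)) ℝ)
    (C₂bar : ∀ i : Fin g, Matrix (Fin (s i)) (Fin n) ℝ)
    (D₂bar : ∀ i : Fin g, Matrix (Fin (s i)) (Fin m) ℝ)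
    (D₁₁ : ∀ i : Fin g, Matrix (Fin (s i)) (Fin (r i)) ℝ)
    -- positive definite square roots of Φᵢ = I - D₁₁ᵢᵀD₁₁ᵢ and Φ̄ᵢ = I - D₁₁ᵢD₁₁ᵢᵀ
    (P : ∀ i : Fin g, Matrix (Fin (r i)) (Fin (r i)) ℝ)
    (hP : ∀ i, (P i).PosDef) (hP2 : ∀ i, P i * P i = 1 - (D₁₁ i)ᵀ * D₁₁ i)
    (Q : ∀ i : Fin g, Matrix (Fin (s i)) (Fin (s i)) ℝ)
    (hQ : ∀ i, (Q i).PosDef) (hQ2 : ∀ i, Q i * Q i = 1 - D₁₁ i * (D₁₁ i)ᵀ)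
    -- loop-shifted data
    (Acheck : Matrix (Fin n) (Fin n) ℝ)
    (hAcheck : Acheck = Abar +
      ∑ i, B₂bar' i * (1 - (D₁₁ i)ᵀ * D₁₁ i)⁻¹ * (D₁₁ i)ᵀ * C₂bar i)
    (B₂check' : ∀ i : Fin g, Matrix (Fin n) (Fin (r i)) ℝ)
    (hB₂check' : ∀ i, B₂check' i = B₂bar' i * (P i)⁻¹)
    (B₂check : Matrix (Fin n) (Fin m) ℝ)
    (hB₂check : B₂check = B₂bar +
      ∑ i, B₂bar' i * (1 - (D₁₁ i)ᵀ * D₁₁ i)⁻¹ * (D₁₁ i)ᵀ * D₂bar i)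
    (C₂check : ∀ i : Fin g, Matrix (Fin (s i)) (Fin n) ℝ)
    (hC₂check : ∀ i, C₂check i = (Q i)⁻¹ * C₂bar i)
    (D₂check : ∀ i : Fin g, Matrix (Fin (s i)) (Fin m) ℝ)
    (hD₂check : ∀ i, D₂check i = (Q i)⁻¹ * D₂bar i)
    -- cost weights and multipliers
    (R : Matrix (Fin n) (Fin n) ℝ)
    (G : Matrix (Fin m) (Fin m) ℝ) (hG : G.PosDef)
    (τ : Fin k → ℝ) (hτ : ∀ j, 0 < τ j)
    -- Riccati data for the loop-shifted system
    (Gτ : Matrix (Fin m) (Fin m) ℝ)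
    (hGτ : Gτ = G + (∑ j, τ j • ((D₁ j)ᵀ * D₁ j)) + ∑ i, (D₂check i)ᵀ * D₂check i)
    (Qτ : Matrix (Fin n) (Fin n) ℝ)
    (hQτ : Qτ = R + (∑ j, τ j • ((C₁ j)ᵀ * C₁ j)) + ∑ i, (C₂check i)ᵀ * C₂check i)
    (Lτ : Matrix (Fin n) (Fin m) ℝ)
    (hLτ : Lτ = (∑ j, τ j • ((C₁ j)ᵀ * D₁ j)) + ∑ i, (C₂check i)ᵀ * D₂check i)
    (Wτ : Matrix (Fin n) (Fin n) ℝ)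
    (hWτ : Wτ = (∑ j, (τ j)⁻¹ • (B₁ j * (B₁ j)ᵀ)) + ∑ i, B₂check' i * (B₂check' i)ᵀ)
    (X : Matrix (Fin n) (Fin n) ℝ) (hXpsd : X.PosSemidef)
    (hRic : (Acheck - B₂check * Gτ⁻¹ * Lτᵀ)ᵀ * X + X * (Acheck - B₂check * Gτ⁻¹ * Lτᵀ) +
      X * (Wτ - B₂check * Gτ⁻¹ * B₂checkᵀ) * X + Qτ - Lτ * Gτ⁻¹ * Lτᵀ = 0)
    (K : Matrix (Fin m) (Fin n) ℝ) (hK : K = -(Gτ⁻¹ * (B₂checkᵀ * X + Lτᵀ)))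
    -- closed-loop trajectory of the system before loop shifting
    (x : ℝ → Fin n → ℝ) (ξ : ∀ j : Fin k, ℝ → Fin (p j) → ℝ)
    (ξbar : ∀ i : Fin g, ℝ → Fin (r i) → ℝ)
    (u : ℝ → Fin m → ℝ) (hu : ∀ t, u t = K *ᵥ x t)
    (x₀ : Fin n → ℝ) (hx0 : x 0 = x₀)
    (hdyn : ∀ t, 0 ≤ t → HasDerivAt x
      (Abar *ᵥ x t + (∑ j, B₁ j *ᵥ ξ j t) + (∑ i, B₂bar' i *ᵥ ξbar i t) + B₂bar *ᵥ u t) t)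
    (hξc : ∀ j, ContinuousOn (ξ j) (Set.Ici (0:ℝ)))
    (hξbarc : ∀ i, ContinuousOn (ξbar i) (Set.Ici (0:ℝ)))
    -- integral quadratic constraints (ζⱼ = C₁ⱼx + D₁ⱼu, ζ̄ᵢ = C̄₂ᵢx + D̄₂ᵢu + D̄₁₁ᵢξ̄ᵢ)
    (S₁ : ∀ _ : Fin k, Matrix (Fin n) (Fin n) ℝ)
    (S₂ : ∀ _ : Fin g, Matrix (Fin n) (Fin n) ℝ)
    (hIQC1 : ∀ T₀, 0 ≤ T₀ → ∀ j,
      (∫ t in (0:ℝ)..T₀,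
        ((∑ a, ξ j t a ^ 2) - ∑ a, ((C₁ j *ᵥ x t + D₁ j *ᵥ u t) a) ^ 2)) ≤
          x₀ ⬝ᵥ (S₁ j *ᵥ x₀))
    (hIQC2 : ∀ T₀, 0 ≤ T₀ → ∀ i,
      (∫ t in (0:ℝ)..T₀,
        ((∑ a, ξbar i t a ^ 2) -
          ∑ a, ((C₂bar i *ᵥ x t + D₂bar i *ᵥ u t + D₁₁ i *ᵥ ξbar i t) a) ^ 2)) ≤
            x₀ ⬝ᵥ (S₂ i *ᵥ x₀)) :
    -- guaranteed cost bound
    ∀ T₀, 0 ≤ T₀ →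
      (∫ t in (0:ℝ)..T₀, (x t ⬝ᵥ (R *ᵥ x t) + u t ⬝ᵥ (G *ᵥ u t))) ≤
        x₀ ⬝ᵥ (X *ᵥ x₀) + (∑ j, τ j * (x₀ ⬝ᵥ (S₁ j *ᵥ x₀))) +
          ∑ i, x₀ ⬝ᵥ (S₂ i *ᵥ x₀) := by
  intro T₀ hT₀
  have hXs : Xᵀ = X := isHermitian_iff_isSymm.1 hXpsd.isHermitian
  have hGτpd : Gτ.PosDef := by
    rw [hGτ]
    refine (hG.add_posSemidef (posSemidef_sum _ fun j _ => ?_)).add_posSemidef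
      (posSemidef_sum _ fun i _ => posSemidef_conjTranspose_mul_self (D₂check i))
    exact (posSemidef_conjTranspose_mul_self (D₁ j)).smul (hτ j).le
  have hcl := riccati_closedLoop hXs (isHermitian_iff_isSymm.1 hGτpd.isHermitian)
    ((isUnit_iff_isUnit_det _).1 hGτpd.isUnit) hRic hK
  have hPu : ∀ i, IsUnit (P i).det := fun i => (isUnit_iff_isUnit_det _).1 (hP i).isUnit
  have hsupply := fun i => loopShift_dotProduct_self_sub
    (isHermitian_iff_isSymm.1 (hP i).isHermitian) (hPu i) (hP2 i)
    (isHermitian_iff_isSymm.1 (hQ i).isHermitian) (hQ2 i)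
  have hxc : ContinuousOn x (Set.Icc 0 T₀) := fun t ht =>
    (hdyn t ht.1).continuousAt.continuousWithinAt
  have huc : ContinuousOn u (Set.Icc 0 T₀) :=
    (by fun_prop : ContinuousOn (fun t => K *ᵥ x t) _).congr fun t _ => hu t
  have hξc' : ∀ j, ContinuousOn (ξ j) (Set.Icc 0 T₀) := fun j =>
    (hξc j).mono Set.Icc_subset_Ici_self
  have hξbarc' : ∀ i, ContinuousOn (ξbar i) (Set.Icc 0 T₀) := fun i =>
    (hξbarc i).mono Set.Icc_subset_Ici_self
  refine (integral_le_of_dissipation hXpsd hT₀ (fun t ht => hdyn t ht.1) (by fun_prop)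
    (by fun_prop) (fun j => by fun_prop) (fun i => by fun_prop) (fun j => (hτ j).le)
    (fun t _ => ?_) (hIQC1 T₀ hT₀) (hIQC2 T₀ hT₀)).trans_eq (by rw [hx0])
  rw [loopShift_dynamics hPu hP2 hAcheck hB₂check' hB₂check]
  -- `Č x + Ď u = Q⁻¹ (C̄ x + D̄ u)` turns each loop-shifted supply term into the original one
  simpa only [sum_sq_eq_dotProduct_self, hC₂check, hD₂check, ← mulVec_mulVec, ← mulVec_add,
    hsupply] using loopShifted_dissipation hτ hXs hGτ hQτ hLτ hWτ hcl (x t) (fun j => ξ j t)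
      (fun i => P i *ᵥ ξbar i t - (P i)⁻¹ *ᵥ ((D₁₁ i)ᵀ *ᵥ (C₂bar i *ᵥ x t + D₂bar i *ᵥ u t)))
      (u t) (hu t)

/-- Part (ii) of the paper's main theorem: the guaranteed cost bound persists
for the uncertain system *before* loop shifting.  The system has direct feedthrough `D̄₁₁ᵢ` in
the nonlinearity channels (with `D̄₁₁ᵢᵀD̄₁₁ᵢ < I`), the signals satisfy the normalized IQCs,
`X ⪰ 0` solves the Riccati equation for the loop-shifted data, and the control is `u = Kx`
with the corresponding minimax LQR gain.  Then for every `T₀ ≥ 0`,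
`∫₀^{T₀}(xᵀRx + uᵀGu) dt ≤ x₀ᵀXx₀ + Σⱼ τⱼ x₀ᵀS₁ⱼx₀ + Σᵢ x₀ᵀS̃₂ᵢx₀`
(Euclidean norms written as sums of squares; `Φᵢ^{1/2}`, `Φ̄ᵢ^{1/2}` are the positive
definite square roots `P i`, `Q i`). -/
theorem stmt10 (n m k g : ℕ) (p q : Fin k → ℕ) (r s : Fin g → ℕ)
    (Abar : Matrix (Fin n) (Fin n) ℝ) (B₂bar : Matrix (Fin n) (Fin m) ℝ)
    (B₁ : ∀ j : Fin k, Matrix (Fin n) (Fin (p j)) ℝ)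
    (C₁ : ∀ j : Fin k, Matrix (Fin (q j)) (Fin n) ℝ)
    (D₁ : ∀ j : Fin k, Matrix (Fin (q j)) (Fin m) ℝ)
    (B₂bar' : ∀ i : Fin g, Matrix (Fin n) (Fin (r i)) ℝ)
    (C₂bar : ∀ i : Fin g, Matrix (Fin (s i)) (Fin n) ℝ)
    (D₂bar : ∀ i : Fin g, Matrix (Fin (s i)) (Fin m) ℝ)
    (D₁₁ : ∀ i : Fin g, Matrix (Fin (s i)) (Fin (r i)) ℝ)
    (hD₁₁ : ∀ i, (1 - (D₁₁ i)ᵀ * D₁₁ i).PosDef)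
    -- positive definite square roots of Φᵢ = I - D₁₁ᵢᵀD₁₁ᵢ and Φ̄ᵢ = I - D₁₁ᵢD₁₁ᵢᵀ
    (P : ∀ i : Fin g, Matrix (Fin (r i)) (Fin (r i)) ℝ)
    (hP : ∀ i, (P i).PosDef) (hP2 : ∀ i, P i * P i = 1 - (D₁₁ i)ᵀ * D₁₁ i)
    (Q : ∀ i : Fin g, Matrix (Fin (s i)) (Fin (s i)) ℝ)
    (hQ : ∀ i, (Q i).PosDef) (hQ2 : ∀ i, Q i * Q i = 1 - D₁₁ i * (D₁₁ i)ᵀ)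
    -- loop-shifted data
    (Acheck : Matrix (Fin n) (Fin n) ℝ)
    (hAcheck : Acheck = Abar +
      ∑ i, B₂bar' i * (1 - (D₁₁ i)ᵀ * D₁₁ i)⁻¹ * (D₁₁ i)ᵀ * C₂bar i)
    (B₂check' : ∀ i : Fin g, Matrix (Fin n) (Fin (r i)) ℝ)
    (hB₂check' : ∀ i, B₂check' i = B₂bar' i * (P i)⁻¹)
    (B₂check : Matrix (Fin n) (Fin m) ℝ)
    (hB₂check : B₂check = B₂bar +
      ∑ i, B₂bar' i * (1 - (D₁₁ i)ᵀ * D₁₁ i)⁻¹ * (D₁₁ i)ᵀ * D₂bar i)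
    (C₂check : ∀ i : Fin g, Matrix (Fin (s i)) (Fin n) ℝ)
    (hC₂check : ∀ i, C₂check i = (Q i)⁻¹ * C₂bar i)
    (D₂check : ∀ i : Fin g, Matrix (Fin (s i)) (Fin m) ℝ)
    (hD₂check : ∀ i, D₂check i = (Q i)⁻¹ * D₂bar i)
    -- cost weights and multipliers
    (R : Matrix (Fin n) (Fin n) ℝ) (hR : R.PosDef)
    (G : Matrix (Fin m) (Fin m) ℝ) (hG : G.PosDef)
    (τ : Fin k → ℝ) (hτ : ∀ j, 0 < τ j)
    -- Riccati data for the loop-shifted system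
    (Gτ : Matrix (Fin m) (Fin m) ℝ)
    (hGτ : Gτ = G + (∑ j, τ j • ((D₁ j)ᵀ * D₁ j)) + ∑ i, (D₂check i)ᵀ * D₂check i)
    (Qτ : Matrix (Fin n) (Fin n) ℝ)
    (hQτ : Qτ = R + (∑ j, τ j • ((C₁ j)ᵀ * C₁ j)) + ∑ i, (C₂check i)ᵀ * C₂check i)
    (Lτ : Matrix (Fin n) (Fin m) ℝ)
    (hLτ : Lτ = (∑ j, τ j • ((C₁ j)ᵀ * D₁ j)) + ∑ i, (C₂check i)ᵀ * D₂check i)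
    (Wτ : Matrix (Fin n) (Fin n) ℝ)
    (hWτ : Wτ = (∑ j, (τ j)⁻¹ • (B₁ j * (B₁ j)ᵀ)) + ∑ i, B₂check' i * (B₂check' i)ᵀ)
    (X : Matrix (Fin n) (Fin n) ℝ) (hXsymm : X.IsSymm) (hXpsd : X.PosSemidef)
    (hRic : (Acheck - B₂check * Gτ⁻¹ * Lτᵀ)ᵀ * X + X * (Acheck - B₂check * Gτ⁻¹ * Lτᵀ) +
      X * (Wτ - B₂check * Gτ⁻¹ * B₂checkᵀ) * X + Qτ - Lτ * Gτ⁻¹ * Lτᵀ = 0)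
    (K : Matrix (Fin m) (Fin n) ℝ) (hK : K = -(Gτ⁻¹ * (B₂checkᵀ * X + Lτᵀ)))
    -- closed-loop trajectory of the system before loop shifting
    (x : ℝ → Fin n → ℝ) (ξ : ∀ j : Fin k, ℝ → Fin (p j) → ℝ)
    (ξbar : ∀ i : Fin g, ℝ → Fin (r i) → ℝ)
    (u : ℝ → Fin m → ℝ) (hu : ∀ t, u t = K *ᵥ x t)
    (x₀ : Fin n → ℝ) (hx0 : x 0 = x₀)
    (hdyn : ∀ t, 0 ≤ t → HasDerivAt x
      (Abar *ᵥ x t + (∑ j, B₁ j *ᵥ ξ j t) + (∑ i, B₂bar' i *ᵥ ξbar i t) + B₂bar *ᵥ u t) t)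
    (hξc : ∀ j, ContinuousOn (ξ j) (Set.Ici (0:ℝ)))
    (hξbarc : ∀ i, ContinuousOn (ξbar i) (Set.Ici (0:ℝ)))
    -- integral quadratic constraints (ζⱼ = C₁ⱼx + D₁ⱼu, ζ̄ᵢ = C̄₂ᵢx + D̄₂ᵢu + D̄₁₁ᵢξ̄ᵢ)
    (S₁ : ∀ _ : Fin k, Matrix (Fin n) (Fin n) ℝ) (hS₁ : ∀ j, (S₁ j).PosDef)
    (S₂ : ∀ _ : Fin g, Matrix (Fin n) (Fin n) ℝ) (hS₂ : ∀ i, (S₂ i).PosDef)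
    (hIQC1 : ∀ T₀, 0 ≤ T₀ → ∀ j,
      (∫ t in (0:ℝ)..T₀,
        ((∑ a, ξ j t a ^ 2) - ∑ a, ((C₁ j *ᵥ x t + D₁ j *ᵥ u t) a) ^ 2)) ≤
          x₀ ⬝ᵥ (S₁ j *ᵥ x₀))
    (hIQC2 : ∀ T₀, 0 ≤ T₀ → ∀ i,
      (∫ t in (0:ℝ)..T₀,
        ((∑ a, ξbar i t a ^ 2) -
          ∑ a, ((C₂bar i *ᵥ x t + D₂bar i *ᵥ u t + D₁₁ i *ᵥ ξbar i t) a) ^ 2)) ≤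
            x₀ ⬝ᵥ (S₂ i *ᵥ x₀)) :
    -- guaranteed cost bound
    ∀ T₀, 0 ≤ T₀ →
      (∫ t in (0:ℝ)..T₀, (x t ⬝ᵥ (R *ᵥ x t) + u t ⬝ᵥ (G *ᵥ u t))) ≤
        x₀ ⬝ᵥ (X *ᵥ x₀) + (∑ j, τ j * (x₀ ⬝ᵥ (S₁ j *ᵥ x₀))) +
          ∑ i, x₀ ⬝ᵥ (S₂ i *ᵥ x₀) :=
  stmt10_general n m k g p q r s Abar B₂bar B₁ C₁ D₁ B₂bar' C₂bar D₂bar D₁₁ P hP hP2 Q hQ hQ2 Acheck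
    hAcheck B₂check' hB₂check' B₂check hB₂check C₂check hC₂check D₂check hD₂check R G hG τ hτ Gτ hGτ
    Qτ hQτ Lτ hLτ Wτ hWτ X hXpsd hRic K hK x ξ ξbar u hu x₀ hx0 hdyn hξc hξbarc S₁ S₂ hIQC1 hIQC2
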